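/- arXiv:2007.00715 — 5 statements merged into one kernel-verified Lean document; each statement's English description precedes it below -/
import Mathlib

section
/- For any vector w in R^n and any k ≤ n, the Euclidean projection of w onto the set of k-sparse nonnegative vectors (vectors with at most k nonzero entries, all entries nonnegative) is obtained by keeping the k largest positive entries of w and setting all other entries to zero. That is, the vector w' defined by keeping the top-k positive entries minimizes ||w' - w||_2 over all k-sparse nonnegative vectors. -/
/-! The projection error is `w i ^ 2` at each `i ∉ S`, and the error of a nonnegative `v` is at
least that much, except at indices `i ∉ S` with `v i ≠ 0` and `w i > 0`. If there is such an index, `S` is full,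
so the `k`-sparse support of `v` misses at least as many indices of `S` as it gains outside `S`;
at the missed indices `v` pays `w j ^ 2 ≥ w i ^ 2`, which covers the gains. -/

open Finset

/-- Squared Euclidean norm of a vector. -/
noncomputable def sqnorm {n : ℕ} (w : Fin n → ℝ) : ℝ := ∑ i, (w i)^2

/-- Euclidean (ℓ₂) norm of a vector. -/
noncomputable def nrm {n : ℕ} (w : Fin n → ℝ) : ℝ := Real.sqrt (∑ i, (w i)^2)

/-- A vector is `k`-sparse if it has at most `k` nonzero entries. -/
def IsSparse {n : ℕ} (k : ℕ) (w : Fin n → ℝ) : Prop :=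
  (Finset.univ.filter fun i => w i ≠ 0).card ≤ k

/-- Coordinate projection onto the subspace supported on `S`. -/
def proj {n : ℕ} (S : Finset (Fin n)) (w : Fin n → ℝ) : Fin n → ℝ :=
  fun i => if i ∈ S then w i else 0

lemma sum_le_sum_of_card_le_of_forall_le {ι M : Type*} [AddCommMonoid M] [LinearOrder M]
    [IsOrderedAddMonoid M] {A B : Finset ι} {f : ι → M} (hcard : #A ≤ #B)
    (hle : ∀ a ∈ A, ∀ b ∈ B, f a ≤ f b) (hB : ∀ b ∈ B, 0 ≤ f b) :
    ∑ a ∈ A, f a ≤ ∑ b ∈ B, f b := by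
  rcases B.eq_empty_or_nonempty with rfl | hBne
  · simp_all
  set m := B.inf' hBne f
  calc ∑ a ∈ A, f a ≤ #A • m := sum_le_card_nsmul A f m fun a ha => le_inf' hBne f (hle a ha)
    _ ≤ #B • m := nsmul_le_nsmul_left (le_inf' hBne f hB) hcard
    _ ≤ ∑ b ∈ B, f b := card_nsmul_le_sum B f m fun b hb => inf'_le f hb

lemma sq_le_sq_sub_of_nonneg_of_nonpos {R : Type*} [CommRing R] [LinearOrder R]
    [IsStrictOrderedRing R] {x y : R} (hx : 0 ≤ x) (hy : y ≤ 0) : y ^ 2 ≤ (x - y) ^ 2 := by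
  nlinarith

lemma sqnorm_proj_sub_self {n : ℕ} (S : Finset (Fin n)) (w : Fin n → ℝ) :
    sqnorm (proj S w - w) = ∑ i ∈ Sᶜ, w i ^ 2 := by
  rw [sqnorm, ← sum_add_sum_compl S, sum_eq_zero fun i hi => by simp [proj, hi], zero_add]
  exact sum_congr rfl fun i hi => by simp [proj, mem_compl.1 hi]

lemma sum_compl_sq_le_sqnorm_sub {n k : ℕ} {w : Fin n → ℝ} {S : Finset (Fin n)}
    (htop : ∀ i ∈ S, ∀ j ∉ S, w j ≤ w i) (hfull : ∀ j ∉ S, 0 < w j → #S = k)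
    {v : Fin n → ℝ} (hv : IsSparse k v) (hv0 : ∀ i, 0 ≤ v i) :
    ∑ i ∈ Sᶜ, w i ^ 2 ≤ sqnorm (v - w) := by
  set T := univ.filter fun i => v i ≠ 0
  set A := Sᶜ.filter fun i => v i ≠ 0 ∧ 0 < w i
  have hcard : #A ≤ #(S \ T) := by
    rcases A.eq_empty_or_nonempty with hA | ⟨j, hj⟩
    · simp [hA]
    obtain ⟨hjS, -, hwj⟩ := mem_filter.1 hj
    have hsub : A ⊆ T \ S := fun i hi => by
      obtain ⟨hiS, hvi, -⟩ := mem_filter.1 hi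
      simpa [T, hvi] using mem_compl.1 hiS
    calc #A ≤ #(T \ S) := card_le_card hsub
      _ ≤ #(S \ T) := card_sdiff_le_card_sdiff_iff.2 (hfull j (mem_compl.1 hjS) hwj ▸ hv)
  have hgain : ∑ i ∈ A, w i ^ 2 ≤ ∑ i ∈ S \ T, (v i - w i) ^ 2 := by
    have hvST : ∀ j ∈ S \ T, v j = 0 := fun j hj => by simpa [T] using (mem_sdiff.1 hj).2
    refine (sum_le_sum_of_card_le_of_forall_le hcard (fun i hi j hj => ?_) fun _ _ => sq_nonneg _)
      |>.trans_eq (sum_congr rfl fun j hj => by rw [hvST j hj, zero_sub, neg_sq])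
    obtain ⟨hiS, -, hwi⟩ := mem_filter.1 hi
    exact pow_le_pow_left₀ hwi.le (htop j (mem_sdiff.1 hj).1 i (mem_compl.1 hiS)) 2
  have hrest : ∀ i ∈ Sᶜ \ A, w i ^ 2 ≤ (v i - w i) ^ 2 := fun i hi => by
    obtain ⟨hiS, hiA⟩ := mem_sdiff.1 hi
    by_cases hvi : v i = 0
    · rw [hvi, zero_sub, neg_sq]
    · exact sq_le_sq_sub_of_nonneg_of_nonpos (hv0 i) (by simpa [A, hiS, hvi] using hiA)
  calc ∑ i ∈ Sᶜ, w i ^ 2 = ∑ i ∈ Sᶜ \ A, w i ^ 2 + ∑ i ∈ A, w i ^ 2 :=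
        (sum_sdiff (filter_subset _ _)).symm
    _ ≤ ∑ i ∈ Sᶜ \ A, (v i - w i) ^ 2 + ∑ i ∈ S \ T, (v i - w i) ^ 2 :=
        add_le_add (sum_le_sum hrest) hgain
    _ ≤ ∑ i ∈ Sᶜ, (v i - w i) ^ 2 + ∑ i ∈ S, (v i - w i) ^ 2 :=
        add_le_add (sum_le_sum_of_subset_of_nonneg sdiff_subset fun _ _ _ => sq_nonneg _)
          (sum_le_sum_of_subset_of_nonneg sdiff_subset fun _ _ _ => sq_nonneg _)
    _ = sqnorm (v - w) := sum_compl_add_sum S _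

theorem projection_onto_sparse_nonneg_is_topk_general {n k : ℕ}
    (w : Fin n → ℝ) (S : Finset (Fin n))
    (htop : ∀ i ∈ S, ∀ j ∉ S, w j ≤ w i)
    (hfull : ∀ j ∉ S, 0 < w j → S.card = k) :
    ∀ v : Fin n → ℝ, IsSparse k v → (∀ i, 0 ≤ v i) →
      nrm (proj S w - w) ≤ nrm (v - w) := by
  intro v hv hv0
  have hsq : sqnorm (proj S w - w) ≤ sqnorm (v - w) :=
    sqnorm_proj_sub_self S w ▸ sum_compl_sq_le_sqnorm_sub htop hfull hv hv0
  exact Real.sqrt_le_sqrt hsq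

/-- The Euclidean projection of `w` onto the set of `k`-sparse nonnegative vectors is
obtained by keeping the `k` largest positive entries of `w` (indexed by `S`) and
setting all other entries to zero. -/
theorem projection_onto_sparse_nonneg_is_topk {n k : ℕ} (hkn : k ≤ n)
    (w : Fin n → ℝ) (S : Finset (Fin n))
    (hScard : S.card ≤ k)
    (hpos : ∀ i ∈ S, 0 < w i)
    (htop : ∀ i ∈ S, ∀ j ∉ S, w j ≤ w i)
    (hfull : ∀ j ∉ S, 0 < w j → S.card = k) :
    ∀ v : Fin n → ℝ, IsSparse k v → (∀ i, 0 ≤ v i) →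
      nrm (proj S w - w) ≤ nrm (v - w) :=
  projection_onto_sparse_nonneg_is_topk_general w S htop hfull
end

section
/- Suppose Φ satisfies the RIP with constants α_k, β_k. Then for any two sets S_1, S_2 ⊆ [n] with |S_1 ∪ S_2| ≤ k and any w ∈ R^n, it holds that ||Π_{S_1} Φ^⊤ Φ Π_{S_1^c} Π_{S_2} w||_2 ≤ ((β_k - α_k)/2) ||Π_{S_2} w||_2. -/
/-!
The cross term `⟨Φu, Φv⟩` of orthogonal vectors supported on a common set of size `≤ k`
is a quarter of `‖Φ(u + v)‖² - ‖Φ(u - v)‖²`, which RIP bounds by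
`(β - α)/4 (‖u‖² + ‖v‖²)`; rescaling `u` and `v` to equal norms turns this into
`(β - α)/2 ‖u‖ ‖v‖`. The vectors `x = Π_{S₁} Φᵀ Φ v` and `v = Π_{S₁ᶜ} Π_{S₂} w` are
orthogonal and supported on `S₁ ∪ S₂`, so `‖x‖² = ⟨Φx, Φv⟩ ≤ (β - α)/2 ‖x‖ ‖v‖`,
and `‖v‖ ≤ ‖Π_{S₂} w‖`.
-/

open Finset

open Matrix Function

section Norms

variable {n : ℕ}

lemma sqnorm_eq_dotProduct (w : Fin n → ℝ) : sqnorm w = w ⬝ᵥ w := by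
  simp only [sqnorm, dotProduct, sq]

lemma sqnorm_nonneg (w : Fin n → ℝ) : 0 ≤ sqnorm w :=
  sum_nonneg fun i _ => sq_nonneg (w i)

lemma sqnorm_eq_zero {w : Fin n → ℝ} : sqnorm w = 0 ↔ w = 0 := by
  rw [sqnorm_eq_dotProduct, dotProduct_self_eq_zero]

lemma sqnorm_smul (c : ℝ) (w : Fin n → ℝ) : sqnorm (c • w) = c ^ 2 * sqnorm w := by
  simp only [sqnorm, Pi.smul_apply, smul_eq_mul, mul_pow, mul_sum]

lemma sqnorm_add_of_dotProduct_eq_zero {u v : Fin n → ℝ} (h : u ⬝ᵥ v = 0) :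
    sqnorm (u + v) = sqnorm u + sqnorm v := by
  simp only [sqnorm_eq_dotProduct, add_dotProduct, dotProduct_add, dotProduct_comm v u, h]
  ring

lemma sqnorm_sub_of_dotProduct_eq_zero {u v : Fin n → ℝ} (h : u ⬝ᵥ v = 0) :
    sqnorm (u - v) = sqnorm u + sqnorm v := by
  simp only [sqnorm_eq_dotProduct, sub_dotProduct, dotProduct_sub, dotProduct_comm v u, h]
  ring

lemma nrm_eq_sqrt_sqnorm (w : Fin n → ℝ) : nrm w = Real.sqrt (sqnorm w) := rfl

lemma nrm_nonneg (w : Fin n → ℝ) : 0 ≤ nrm w := Real.sqrt_nonneg _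

lemma nrm_sq (w : Fin n → ℝ) : nrm w ^ 2 = sqnorm w := Real.sq_sqrt (sqnorm_nonneg w)

lemma nrm_eq_zero {w : Fin n → ℝ} : nrm w = 0 ↔ w = 0 := by
  rw [nrm_eq_sqrt_sqnorm, Real.sqrt_eq_zero (sqnorm_nonneg w), sqnorm_eq_zero]

end Norms

section Projections

variable {n : ℕ}

lemma support_proj_subset (S : Finset (Fin n)) (w : Fin n → ℝ) : support (proj S w) ⊆ S := by
  intro i hi
  by_contra h
  exact hi (if_neg h)

lemma support_proj_subset_support (S : Finset (Fin n)) (w : Fin n → ℝ) :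
    support (proj S w) ⊆ support w := by
  intro i hi
  by_cases h : i ∈ S <;> simp_all [proj]

lemma proj_dotProduct_proj (S : Finset (Fin n)) (a b : Fin n → ℝ) :
    proj S a ⬝ᵥ proj S b = proj S a ⬝ᵥ b := by
  refine sum_congr rfl fun i _ => ?_
  by_cases h : i ∈ S <;> simp [proj, h]

lemma proj_dotProduct_proj_compl (S : Finset (Fin n)) (a b : Fin n → ℝ) :
    proj S a ⬝ᵥ proj Sᶜ b = 0 := by
  refine sum_eq_zero fun i _ => ?_
  by_cases h : i ∈ S <;> simp [proj, h]

lemma nrm_proj_le (S : Finset (Fin n)) (w : Fin n → ℝ) : nrm (proj S w) ≤ nrm w := by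
  refine Real.sqrt_le_sqrt (sum_le_sum fun i _ => ?_)
  by_cases h : i ∈ S <;> simp [proj, h, sq_nonneg]

end Projections

lemma isSparse_of_support_subset {n k : ℕ} {w : Fin n → ℝ} {T : Finset (Fin n)}
    (hw : support w ⊆ T) (hT : T.card ≤ k) : IsSparse k w :=
  (card_le_card fun i hi => hw (by simpa using hi)).trans hT

def SatisfiesRIP {m n : ℕ} (k : ℕ) (α β : ℝ) (Φ : Matrix (Fin m) (Fin n) ℝ) : Prop :=
  ∀ w : Fin n → ℝ, IsSparse k w →
    α * sqnorm w ≤ sqnorm (Φ *ᵥ w) ∧ sqnorm (Φ *ᵥ w) ≤ β * sqnorm w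

section RIP

variable {m n k : ℕ} {Φ : Matrix (Fin m) (Fin n) ℝ} {α β : ℝ} {T : Finset (Fin n)}
  {u v : Fin n → ℝ}

lemma SatisfiesRIP.dotProduct_le_sqnorm_add (hΦ : SatisfiesRIP k α β Φ) (hT : T.card ≤ k)
    (hu : support u ⊆ T) (hv : support v ⊆ T) (huv : u ⬝ᵥ v = 0) :
    Φ *ᵥ u ⬝ᵥ Φ *ᵥ v ≤ (β - α) / 4 * (sqnorm u + sqnorm v) := by
  have hadd := (hΦ (u + v) (isSparse_of_support_subset
    ((support_add u v).trans (Set.union_subset hu hv)) hT)).2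
  have hsub := (hΦ (u - v) (isSparse_of_support_subset
    ((support_sub u v).trans (Set.union_subset hu hv)) hT)).1
  rw [sqnorm_add_of_dotProduct_eq_zero huv] at hadd
  rw [sqnorm_sub_of_dotProduct_eq_zero huv] at hsub
  have polarization :
      4 * (Φ *ᵥ u ⬝ᵥ Φ *ᵥ v) = sqnorm (Φ *ᵥ (u + v)) - sqnorm (Φ *ᵥ (u - v)) := by
    simp only [sqnorm_eq_dotProduct, mulVec_add, mulVec_sub, add_dotProduct, dotProduct_add,
      sub_dotProduct, dotProduct_sub, dotProduct_comm (Φ *ᵥ v) (Φ *ᵥ u)]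
    ring
  linarith

lemma SatisfiesRIP.dotProduct_le_nrm_mul (hΦ : SatisfiesRIP k α β Φ) (hT : T.card ≤ k)
    (hu : support u ⊆ T) (hv : support v ⊆ T) (huv : u ⬝ᵥ v = 0) :
    Φ *ᵥ u ⬝ᵥ Φ *ᵥ v ≤ (β - α) / 2 * (nrm u * nrm v) := by
  rcases (mul_nonneg (nrm_nonneg u) (nrm_nonneg v)).eq_or_lt with h0 | hpos
  · rw [← h0, mul_zero]
    obtain h | h := mul_eq_zero.1 h0.symm <;> simp [nrm_eq_zero.1 h]
  -- Rescale `u` and `v` to the common norm `‖u‖ ‖v‖`.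
  have key := hΦ.dotProduct_le_sqnorm_add (u := nrm v • u) (v := nrm u • v) hT
    ((support_const_smul_subset _ u).trans hu) ((support_const_smul_subset _ v).trans hv)
    (by rw [smul_dotProduct, dotProduct_smul, huv, smul_zero, smul_zero])
  simp only [mulVec_smul, smul_dotProduct, dotProduct_smul, smul_eq_mul, sqnorm_smul] at key
  rw [← nrm_sq u, ← nrm_sq v] at key
  refine le_of_mul_le_mul_left ?_ hpos
  linarith [key]

end RIP

theorem rip_offdiag_proj_general {m n k : ℕ} (Φ : Matrix (Fin m) (Fin n) ℝ) (α β : ℝ)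
    (hαβ : α ≤ β)
    (hRIP : ∀ w : Fin n → ℝ, IsSparse k w →
      α * sqnorm w ≤ sqnorm (Φ.mulVec w) ∧ sqnorm (Φ.mulVec w) ≤ β * sqnorm w)
    (S₁ S₂ : Finset (Fin n)) (hS : (S₁ ∪ S₂).card ≤ k) (w : Fin n → ℝ) :
    nrm (proj S₁ (Φ.transpose.mulVec (Φ.mulVec (proj S₁ᶜ (proj S₂ w)))))
      ≤ (β - α) / 2 * nrm (proj S₂ w) := by
  set v := proj S₁ᶜ (proj S₂ w)
  set x := proj S₁ (Φᵀ *ᵥ Φ *ᵥ v)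
  have hx : support x ⊆ ↑(S₁ ∪ S₂) :=
    (support_proj_subset _ _).trans (by simp [Set.subset_union_left])
  have hv : support v ⊆ ↑(S₁ ∪ S₂) :=
    (support_proj_subset_support _ _).trans ((support_proj_subset _ _).trans (by simp))
  have hbound : nrm x ^ 2 ≤ (β - α) / 2 * (nrm x * nrm v) := by
    calc nrm x ^ 2 = x ⬝ᵥ Φᵀ *ᵥ Φ *ᵥ v := by
          rw [nrm_sq, sqnorm_eq_dotProduct, proj_dotProduct_proj]
      _ = Φ *ᵥ x ⬝ᵥ Φ *ᵥ v := by rw [dotProduct_mulVec, vecMul_transpose]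
      _ ≤ (β - α) / 2 * (nrm x * nrm v) :=
        SatisfiesRIP.dotProduct_le_nrm_mul hRIP hS hx hv (proj_dotProduct_proj_compl _ _ _)
  have hc : 0 ≤ (β - α) / 2 := by linarith
  have hxv : nrm x ≤ (β - α) / 2 * nrm v := by
    nlinarith [nrm_nonneg x, mul_nonneg hc (nrm_nonneg v)]
  exact hxv.trans (mul_le_mul_of_nonneg_left (nrm_proj_le _ _) hc)

/-- Lemma 2: for support sets `S₁, S₂` with `|S₁ ∪ S₂| ≤ k`,
`‖Π_{S₁} Φᵀ Φ Π_{S₁ᶜ} Π_{S₂} w‖ ≤ ((β - α)/2) ‖Π_{S₂} w‖`. -/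
theorem rip_offdiag_proj {m n k : ℕ} (Φ : Matrix (Fin m) (Fin n) ℝ) (α β : ℝ)
    (hα : 0 < α) (hαβ : α ≤ β)
    (hRIP : ∀ w : Fin n → ℝ, IsSparse k w →
      α * sqnorm w ≤ sqnorm (Φ.mulVec w) ∧ sqnorm (Φ.mulVec w) ≤ β * sqnorm w)
    (S₁ S₂ : Finset (Fin n)) (hS : (S₁ ∪ S₂).card ≤ k) (w : Fin n → ℝ) :
    nrm (proj S₁ (Φ.transpose.mulVec (Φ.mulVec (proj S₁ᶜ (proj S₂ w)))))
      ≤ (β - α) / 2 * nrm (proj S₂ w) :=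
  rip_offdiag_proj_general Φ α β hαβ hRIP S₁ S₂ hS w
end

section
/- Let X, Y ∈ R^n be unit vectors with disjoint supports, such that X + Y is k-sparse, and suppose Φ satisfies the RIP with constants α_k ≤ β_k. Then |⟨ΦX, ΦY⟩| ≤ (β_k - α_k)/2. -/
open Finset

/-!
Polarization: `4 ⟨ΦX, ΦY⟩ = ‖Φ(X + Y)‖² - ‖Φ(X - Y)‖²`. Since `X` and `Y` have disjoint supports,
`X - Y` has the same support as `X + Y`, so both are `k`-sparse, and both have squared norm `2`.
The RIP puts both terms in `[2α, 2β]`, so their difference is at most `2(β - α)` in absolute value.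
-/

section

variable {n : ℕ}

theorem sqnorm_eq_nrm_sq (w : Fin n → ℝ) : sqnorm w = nrm w ^ 2 := by
  rw [nrm, Real.sq_sqrt (sum_nonneg fun i _ => sq_nonneg (w i)), sqnorm]

theorem sqnorm_add (v w : Fin n → ℝ) :
    sqnorm (v + w) = sqnorm v + 2 * ∑ i, v i * w i + sqnorm w := by
  simp only [sqnorm, Pi.add_apply, mul_sum, ← sum_add_distrib]
  exact sum_congr rfl fun i _ => by ring

theorem sqnorm_sub (v w : Fin n → ℝ) :
    sqnorm (v - w) = sqnorm v - 2 * ∑ i, v i * w i + sqnorm w := by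
  simp only [sqnorm, Pi.sub_apply, mul_sum, ← sum_sub_distrib, ← sum_add_distrib]
  exact sum_congr rfl fun i _ => by ring

theorem sqnorm_add_sub_sqnorm_sub (v w : Fin n → ℝ) :
    sqnorm (v + w) - sqnorm (v - w) = 4 * ∑ i, v i * w i := by
  rw [sqnorm_add, sqnorm_sub]
  ring

variable {v w : Fin n → ℝ}

theorem sqnorm_add_of_disjoint (h : ∀ i, v i * w i = 0) :
    sqnorm (v + w) = sqnorm v + sqnorm w := by
  rw [sqnorm_add, sum_eq_zero fun i _ => h i]
  ring

theorem sqnorm_sub_of_disjoint (h : ∀ i, v i * w i = 0) :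
    sqnorm (v - w) = sqnorm v + sqnorm w := by
  rw [sqnorm_sub, sum_eq_zero fun i _ => h i]
  ring

theorem sub_ne_zero_iff_add_ne_zero_of_mul_eq_zero {a b : ℝ} (h : a * b = 0) :
    a - b ≠ 0 ↔ a + b ≠ 0 := by
  rcases mul_eq_zero.mp h with rfl | rfl <;> simp

theorem isSparse_sub_iff_of_disjoint {k : ℕ} (h : ∀ i, v i * w i = 0) :
    IsSparse k (v - w) ↔ IsSparse k (v + w) := by
  simp only [IsSparse, Pi.sub_apply, Pi.add_apply,
    sub_ne_zero_iff_add_ne_zero_of_mul_eq_zero (h _)]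

end

theorem rip_inner_bound_disjoint_unit_general {m n k : ℕ} (Φ : Matrix (Fin m) (Fin n) ℝ)
    (α β : ℝ)
    (hRIP : ∀ w : Fin n → ℝ, IsSparse k w →
      α * sqnorm w ≤ sqnorm (Φ.mulVec w) ∧ sqnorm (Φ.mulVec w) ≤ β * sqnorm w)
    (X Y : Fin n → ℝ) (hX : nrm X = 1) (hY : nrm Y = 1)
    (hdisj : ∀ i, X i * Y i = 0) (hsp : IsSparse k (X + Y)) :
    |∑ j, Φ.mulVec X j * Φ.mulVec Y j| ≤ (β - α) / 2 := by
  have hX2 : sqnorm X = 1 := by rw [sqnorm_eq_nrm_sq, hX, one_pow]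
  have hY2 : sqnorm Y = 1 := by rw [sqnorm_eq_nrm_sq, hY, one_pow]
  obtain ⟨hadd_lo, hadd_hi⟩ := hRIP _ hsp
  obtain ⟨hsub_lo, hsub_hi⟩ := hRIP _ ((isSparse_sub_iff_of_disjoint hdisj).2 hsp)
  rw [sqnorm_add_of_disjoint hdisj, hX2, hY2] at hadd_lo hadd_hi
  rw [sqnorm_sub_of_disjoint hdisj, hX2, hY2] at hsub_lo hsub_hi
  have hpolar := sqnorm_add_sub_sqnorm_sub (Φ.mulVec X) (Φ.mulVec Y)
  rw [← Matrix.mulVec_add, ← Matrix.mulVec_sub] at hpolar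
  rw [abs_le]
  constructor <;> linarith

/-- For unit vectors `X, Y` with disjoint supports whose sum is `k`-sparse,
the RIP implies `|⟨ΦX, ΦY⟩| ≤ (β - α)/2`. -/
theorem rip_inner_bound_disjoint_unit {m n k : ℕ} (Φ : Matrix (Fin m) (Fin n) ℝ)
    (α β : ℝ) (hα : 0 < α) (hαβ : α ≤ β)
    (hRIP : ∀ w : Fin n → ℝ, IsSparse k w →
      α * sqnorm w ≤ sqnorm (Φ.mulVec w) ∧ sqnorm (Φ.mulVec w) ≤ β * sqnorm w)
    (X Y : Fin n → ℝ) (hX : nrm X = 1) (hY : nrm Y = 1)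
    (hdisj : ∀ i, X i * Y i = 0) (hsp : IsSparse k (X + Y)) :
    |∑ j, Φ.mulVec X j * Φ.mulVec Y j| ≤ (β - α) / 2 :=
  rip_inner_bound_disjoint_unit_general Φ α β hRIP X Y hX hY hdisj hsp
end

section
/- Let ρ, τ ≥ 0 and φ = (ρ(1+τ) + √(ρ²(1+τ)² + 4ρτ))/2. Then φ < 1 if and only if ρ < 1/(1 + 2τ). -/
/-!
`φ` is the larger root of `p(x) = x² - ρ(1+τ)x - ρτ`. The product of the roots is `-ρτ ≤ 0`, so the
smaller root lies below `1`; hence `φ < 1` exactly when `p(1) = 1 - ρ(1+2τ)` is positive.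
-/

open Finset

theorem larger_quadratic_root_lt_iff {b c t : ℝ} (hc : 0 ≤ c) (ht : 0 ≤ t) :
    (b + √(b ^ 2 + 4 * c)) / 2 < t ↔ b * t + c < t ^ 2 := by
  set s := √(b ^ 2 + 4 * c)
  have hs : s ^ 2 = b ^ 2 + 4 * c := Real.sq_sqrt (by positivity)
  have hbs : b ≤ s := Real.le_sqrt_of_sq_le (by linarith)
  have hs0 : 0 ≤ s := Real.sqrt_nonneg _
  have vieta : t ^ 2 - (b * t + c) = (t - (b - s) / 2) * (t - (b + s) / 2) := by
    linear_combination (1 / 4 : ℝ) * hs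
  have smaller_root_le : (b - s) / 2 ≤ t := by linarith
  rw [← sub_pos (a := t ^ 2), vieta]
  constructor
  · intro h
    exact mul_pos (by linarith) (by linarith)
  · intro h
    linarith [pos_of_mul_pos_right h (by linarith)]

/-- The contraction factor `φ = (ρ(1+τ) + √(ρ²(1+τ)² + 4ρτ))/2` satisfies `φ < 1`
if and only if `ρ < 1/(1+2τ)`. -/
theorem phi_lt_one_iff (ρ τ : ℝ) (hρ : 0 ≤ ρ) (hτ : 0 ≤ τ) :
    (ρ*(1+τ) + Real.sqrt (ρ^2*(1+τ)^2 + 4*ρ*τ)) / 2 < 1 ↔ ρ < 1/(1+2*τ) := by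
  have hdisc : ρ^2*(1+τ)^2 + 4*ρ*τ = (ρ*(1+τ))^2 + 4*(ρ*τ) := by ring
  rw [hdisc, larger_quadratic_root_lt_iff (mul_nonneg hρ hτ) zero_le_one,
    lt_div_iff₀ (by positivity)]
  constructor <;> intro h <;> linarith
end

section
/- Let w_{t+1} be the optimal Euclidean projection of a vector v onto the set of k-sparse nonnegative vectors, and let w* be any k-sparse nonnegative vector. Let S* = supp(w_{t+1}) ∪ supp(w*). Then ||w_{t+1} - Π_{S*}(v)||_2 ≤ ||w* - Π_{S*}(v)||_2, and consequently ||w_{t+1} - w*||_2 ≤ 2||Π_{S*}(v) - w*||_2. -/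
open Finset

/-! For any `w` supported in `S`, the squared distances from `w` to `v` and to `Π_S v` differ by
the constant `‖v - Π_S v‖²` (Pythagoras across `S` and its complement), so the optimality of
`w_{t+1}` against `w*` survives replacing `v` by `Π_S v`. The factor-two bound is then the
triangle inequality through `Π_S v`. -/

section

variable {n : ℕ}

lemma nrm_eq_norm_toLp (w : Fin n → ℝ) : nrm w = ‖WithLp.toLp 2 w‖ := by
  simp only [nrm, EuclideanSpace.norm_eq, Real.norm_eq_abs, sq_abs]

lemma nrm_sub_comm (a b : Fin n → ℝ) : nrm (a - b) = nrm (b - a) := by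
  simp only [nrm_eq_norm_toLp, WithLp.toLp_sub, norm_sub_rev]

lemma nrm_sub_le_nrm_sub_add_nrm_sub (a b c : Fin n → ℝ) :
    nrm (a - c) ≤ nrm (a - b) + nrm (b - c) := by
  simpa only [nrm_eq_norm_toLp, WithLp.toLp_sub] using norm_sub_le_norm_sub_add_norm_sub _ _ _

lemma nrm_le_nrm_iff {a b : Fin n → ℝ} : nrm a ≤ nrm b ↔ sqnorm a ≤ sqnorm b :=
  Real.sqrt_le_sqrt_iff (Finset.sum_nonneg fun i _ => sq_nonneg (b i))

lemma sqnorm_sub_eq_sqnorm_sub_proj_add {S : Finset (Fin n)} {w : Fin n → ℝ}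
    (hw : ∀ i ∉ S, w i = 0) (v : Fin n → ℝ) :
    sqnorm (w - v) = sqnorm (w - proj S v) + sqnorm (v - proj S v) := by
  simp only [sqnorm, ← Finset.sum_add_distrib]
  refine Finset.sum_congr rfl fun i _ => ?_
  by_cases hi : i ∈ S <;> simp [proj, hi, hw]

lemma nrm_sub_proj_le_of_nrm_sub_le {S : Finset (Fin n)} {w u v : Fin n → ℝ}
    (hw : ∀ i ∉ S, w i = 0) (hu : ∀ i ∉ S, u i = 0) (h : nrm (w - v) ≤ nrm (u - v)) :
    nrm (w - proj S v) ≤ nrm (u - proj S v) := by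
  rw [nrm_le_nrm_iff, sqnorm_sub_eq_sqnorm_sub_proj_add hw,
    sqnorm_sub_eq_sqnorm_sub_proj_add hu] at h
  exact nrm_le_nrm_iff.mpr (by linarith)

lemma nrm_sub_le_two_mul_of_nrm_sub_le {w u p : Fin n → ℝ} (h : nrm (w - p) ≤ nrm (u - p)) :
    nrm (w - u) ≤ 2 * nrm (p - u) :=
  calc nrm (w - u) ≤ nrm (w - p) + nrm (p - u) := nrm_sub_le_nrm_sub_add_nrm_sub w p u
    _ ≤ nrm (u - p) + nrm (p - u) := by gcongr
    _ = 2 * nrm (p - u) := by rw [nrm_sub_comm u p, two_mul]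

end

theorem projection_comparison_general {n k : ℕ} (v wstar wnext : Fin n → ℝ)
    (hopt : ∀ u : Fin n → ℝ, IsSparse k u → (∀ i, 0 ≤ u i) →
      nrm (wnext - v) ≤ nrm (u - v))
    (hwstar : IsSparse k wstar) (hwstarpos : ∀ i, 0 ≤ wstar i)
    (S : Finset (Fin n))
    (hS : S = Finset.univ.filter (fun i => wnext i ≠ 0 ∨ wstar i ≠ 0)) :
    nrm (wnext - proj S v) ≤ nrm (wstar - proj S v) ∧
    nrm (wnext - wstar) ≤ 2 * nrm (proj S v - wstar) := by
  have hwnext_supp : ∀ i ∉ S, wnext i = 0 := fun i hi => by simp_all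
  have hwstar_supp : ∀ i ∉ S, wstar i = 0 := fun i hi => by simp_all
  have hcloser :=
    nrm_sub_proj_le_of_nrm_sub_le hwnext_supp hwstar_supp (hopt wstar hwstar hwstarpos)
  exact ⟨hcloser, nrm_sub_le_two_mul_of_nrm_sub_le hcloser⟩

/-- For `w_{t+1}` the optimal projection of `v` onto `k`-sparse nonnegative vectors and
`w*` any `k`-sparse nonnegative vector, with `S* = supp(w_{t+1}) ∪ supp(w*)`:
`‖w_{t+1} - Π_{S*} v‖ ≤ ‖w* - Π_{S*} v‖` and `‖w_{t+1} - w*‖ ≤ 2 ‖Π_{S*} v - w*‖`. -/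
theorem projection_comparison {n k : ℕ} (v wstar wnext : Fin n → ℝ)
    (hwnexts : IsSparse k wnext) (hwnextpos : ∀ i, 0 ≤ wnext i)
    (hopt : ∀ u : Fin n → ℝ, IsSparse k u → (∀ i, 0 ≤ u i) →
      nrm (wnext - v) ≤ nrm (u - v))
    (hwstar : IsSparse k wstar) (hwstarpos : ∀ i, 0 ≤ wstar i)
    (S : Finset (Fin n))
    (hS : S = Finset.univ.filter (fun i => wnext i ≠ 0 ∨ wstar i ≠ 0)) :
    nrm (wnext - proj S v) ≤ nrm (wstar - proj S v) ∧
    nrm (wnext - wstar) ≤ 2 * nrm (proj S v - wstar) :=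
  projection_comparison_general v wstar wnext hopt hwstar hwstarpos S hS
end
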